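/- arXiv:1406.3813 — 2 statements merged into one kernel-verified Lean document; each statement's English description precedes it below -/
import Mathlib

section
/- Let P be a projective right R-module. Then the following are equivalent: (1) for every endomorphism φ of P, φ(P) = eP ⊕ P′, where e ∈ End(P) is an idempotent and P′ is a singular module; (2) P is a CS-Rickart module satisfying the C₂ condition; (3) P is a d-CS-Rickart module with Δ(P) = ∇(P). -/
/-! The pivot is the singular submodule `Z(P)`. For projective `P` an endomorphism has
essential kernel iff its image lies in `Z(P)`, so a projective module inside `Z(P)` is zero.

From (2) or (3), split off a summand `D ≤ φ(P)` with complement `C`; composing `φ` with the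
projection onto `C` gives an endomorphism with essential kernel (by CS-Rickart and C₂,
resp. by d-CS-Rickart and `∇ ⊆ Δ`), so `φ(P) ∩ C ≤ Z(P)`, which is (1).

Conversely, assume (1) with `P` projective and `φ(P) = eP ⊕ P'`. Then `ker (eφ)` is a summand
in which `ker φ` is essential, since `(1 - e)φ` has singular image. An image isomorphic to a
summand is projective, so its singular part `P'` vanishes: this is C₂. Likewise, if
`z(P) ≤ Z(P)` then `1 - z` is injective, so its image is projective, hence a summand `eP`,
and `1 - e` has singular image, forcing `1 - z` onto. So every submodule of `Z(P)` is small,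
which gives d-CS-Rickart and `Δ = ∇`. -/

namespace CSRickartPaper

section Defs

variable {R : Type*} [Ring R] {M : Type*} [AddCommGroup M] [Module R M]

/-- `N` is an essential submodule of `P` (inside the ambient module `M`):
`N ≤ P` and every submodule of `P` intersecting `N` trivially is zero. -/
def EssentialIn (N P : Submodule R M) : Prop :=
  N ≤ P ∧ ∀ K : Submodule R M, K ≤ P → N ⊓ K = ⊥ → K = ⊥

/-- `N` is a small (superfluous) submodule of `P`. -/
def SmallIn (N P : Submodule R M) : Prop :=
  N ≤ P ∧ ∀ K : Submodule R M, K ≤ P → N ⊔ K = P → K = P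

/-- `N` is a direct summand of `M`. -/
def IsDirectSummand (N : Submodule R M) : Prop :=
  ∃ K : Submodule R M, IsCompl N K

/-- `N` lies above the direct summand `D` of `M`: `M = D ⊕ K`, `D ≤ N` and
`N ⊓ K` is small in `K`. -/
def LiesAbove (N D : Submodule R M) : Prop :=
  ∃ K : Submodule R M, IsCompl D K ∧ D ≤ N ∧ SmallIn (N ⊓ K) K

/-- `N` lies above a direct summand of `M`. -/
def LiesAboveSummand (N : Submodule R M) : Prop :=
  ∃ D : Submodule R M, LiesAbove N D

end Defs

section ModuleDefs

variable (R : Type*) [Ring R] (M : Type*) [AddCommGroup M] [Module R M]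

/-- `M` is a CS-Rickart module: the kernel of every endomorphism is essential
in a direct summand `eM`, `e` an idempotent endomorphism. -/
def IsCSRickart : Prop :=
  ∀ φ : Module.End R M, ∃ e : Module.End R M, IsIdempotentElem e ∧
    EssentialIn (LinearMap.ker φ) (LinearMap.range e)

/-- `M` is a d-CS-Rickart module: the image of every endomorphism lies above a
direct summand of `M`. -/
def IsDCSRickart : Prop :=
  ∀ φ : Module.End R M, LiesAboveSummand (LinearMap.range φ)

/-- `M` is a Rickart module. -/
def IsRickart : Prop :=
  ∀ φ : Module.End R M, ∃ e : Module.End R M, IsIdempotentElem e ∧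
    LinearMap.ker φ = LinearMap.range e

/-- `M` is a dual Rickart module. -/
def IsDRickart : Prop :=
  ∀ φ : Module.End R M, ∃ e : Module.End R M, IsIdempotentElem e ∧
    LinearMap.range φ = LinearMap.range e

/-- `M` is a CS (extending) module. -/
def IsCSModule : Prop :=
  ∀ N : Submodule R M, ∃ D : Submodule R M, IsDirectSummand D ∧ EssentialIn N D

/-- `M` is a lifting (d-CS) module. -/
def IsLifting : Prop :=
  ∀ N : Submodule R M, LiesAboveSummand N

/-- `M` is a singular module: the annihilator of every element is an essential
ideal of `R`. -/
def IsSingularModule : Prop :=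
  ∀ m : M, EssentialIn (LinearMap.ker (LinearMap.toSpanSingleton R M m)) (⊤ : Submodule R R)

/-- `M` is uniform: every nonzero submodule is essential. -/
def IsUniformModule : Prop :=
  ∀ N : Submodule R M, N ≠ ⊥ → EssentialIn N (⊤ : Submodule R M)

/-- `M` satisfies the C₂ condition: every submodule isomorphic to a direct
summand is itself a direct summand. -/
def IsC2 : Prop :=
  ∀ N D : Submodule R M, IsDirectSummand D → Nonempty (N ≃ₗ[R] D) → IsDirectSummand N

/-- `M` is K-nonsingular. -/
def IsKNonsingular : Prop :=
  ∀ φ : Module.End R M, ∀ N : Submodule R M, EssentialIn N (⊤ : Submodule R M) →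
    N ≤ LinearMap.ker φ → φ = 0

/-- `M` is T-noncosingular. -/
def IsTNoncosingular : Prop :=
  ∀ φ : Module.End R M, φ ≠ 0 → ¬ SmallIn (LinearMap.range φ) (⊤ : Submodule R M)

/-- `M` is an SIP-CS module. -/
def IsSIPCS : Prop :=
  ∀ A B : Submodule R M, IsDirectSummand A → IsDirectSummand B →
    ∃ D : Submodule R M, IsDirectSummand D ∧ EssentialIn (A ⊓ B) D

/-- `M` is an SSP-d-CS module. -/
def IsSSPdCS : Prop :=
  ∀ A B : Submodule R M, IsDirectSummand A → IsDirectSummand B →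
    LiesAboveSummand (A ⊔ B)

end ModuleDefs

section RelDefs

variable (R : Type*) [Ring R] (M N : Type*) [AddCommGroup M] [Module R M]
  [AddCommGroup N] [Module R N]

/-- `M` is relatively CS-Rickart to `N`. -/
def IsRelCSRickart : Prop :=
  ∀ φ : M →ₗ[R] N, ∃ e : Module.End R M, IsIdempotentElem e ∧
    EssentialIn (LinearMap.ker φ) (LinearMap.range e)

/-- `M` is relatively d-CS-Rickart to `N`. -/
def IsRelDCSRickart : Prop :=
  ∀ φ : M →ₗ[R] N, LiesAboveSummand (LinearMap.range φ)

/-- `N` is `M`-injective. -/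
def IsRelInjective : Prop :=
  ∀ (A : Submodule R M) (f : A →ₗ[R] N), ∃ g : M →ₗ[R] N, ∀ a : A, g a = f a

end RelDefs

section RingDefs

variable (R : Type*) [Ring R]

/-- The annihilator of an element `a` of `R`, as an ideal (kernel of `r ↦ r • a`). -/
def annElem (a : R) : Submodule R R :=
  LinearMap.ker (LinearMap.toSpanSingleton R R a)

/-- The annihilator of a subset `X` of `R`. -/
def annSet (X : Set R) : Submodule R R :=
  ⨅ x ∈ X, annElem R x

/-- The principal ideal generated by `e`, i.e. the image of `r ↦ r • e`. -/
def idealGen (e : R) : Submodule R R :=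
  LinearMap.range (LinearMap.toSpanSingleton R R e)

/-- `R` is an ACS ring: the annihilator of every element is essential in a
direct summand `eR` of `R`. -/
def IsACSRing : Prop :=
  ∀ a : R, ∃ e : R, IsIdempotentElem e ∧ EssentialIn (annElem R a) (idealGen R e)

/-- `R` is an essentially Baer ring. -/
def IsEssentiallyBaer : Prop :=
  ∀ X : Set R, X.Nonempty → ∃ e : R, IsIdempotentElem e ∧
    EssentialIn (annSet R X) (idealGen R e)

/-- The Jacobson radical of the ring `R`. -/
noncomputable def jacRad : Ideal R := Ideal.jacobson (⊥ : Ideal R)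

/-- `R` is semiregular: `R/J(R)` is von Neumann regular and idempotents lift
modulo `J(R)` (stated elementwise). -/
def IsSemiregularRing : Prop :=
  (∀ a : R, ∃ b : R, a - a * b * a ∈ jacRad R) ∧
  (∀ a : R, a - a * a ∈ jacRad R →
    ∃ e : R, IsIdempotentElem e ∧ e - a ∈ jacRad R)

/-- `J(R)` coincides with the singular ideal `Z(R)`. -/
def JacEqSingular : Prop :=
  ∀ a : R, a ∈ jacRad R ↔ EssentialIn (annElem R a) (⊤ : Submodule R R)

end RingDefs

section GenDefs

variable {R : Type*} [Ring R] {M : Type*} [AddCommGroup M] [Module R M]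

/-- A submodule is `n`-generated if it is spanned by at most `n` elements. -/
def NGen (n : ℕ) (N : Submodule R M) : Prop :=
  ∃ f : Fin n → M, Submodule.span R (Set.range f) = N

end GenDefs

end CSRickartPaper

namespace CSRickartPaper

open LinearMap Submodule

section Essential

variable {R : Type*} [Ring R] {M : Type*} [AddCommGroup M] [Module R M]
  {M₂ : Type*} [AddCommGroup M₂] [Module R M₂]

theorem essentialIn_iff {A N : Submodule R M} (hAN : A ≤ N) :
    EssentialIn A N ↔ ∀ x ∈ N, x ≠ 0 → ∃ r : R, r • x ∈ A ∧ r • x ≠ 0 := by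
  refine ⟨fun h x hx hx0 => ?_, fun h => ⟨hAN, fun K hKN hAK => ?_⟩⟩
  · have hAx : A ⊓ span R {x} ≠ ⊥ := fun hbot =>
      hx0 (span_singleton_eq_bot.mp (h.2 _ ((span_singleton_le_iff_mem _ _).mpr hx) hbot))
    obtain ⟨y, ⟨hyA, hyx⟩, hy0⟩ := exists_mem_ne_zero_of_ne_bot hAx
    obtain ⟨r, rfl⟩ := mem_span_singleton.mp hyx
    exact ⟨r, hyA, hy0⟩
  · refine eq_bot_iff.mpr fun x hxK => (mem_bot R).mpr (by_contra fun hx0 => ?_)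
    obtain ⟨r, hrA, hr0⟩ := h x (hKN hxK) hx0
    exact hr0 ((mem_bot R).mp (hAK ▸ ⟨hrA, K.smul_mem r hxK⟩))

theorem EssentialIn.mono {A B : Submodule R M} (h : EssentialIn A ⊤) (hAB : A ≤ B) :
    EssentialIn B ⊤ :=
  ⟨le_top, fun K hK hBK => h.2 K hK (eq_bot_iff.mpr (hBK ▸ inf_le_inf_right K hAB))⟩

theorem EssentialIn.inf {A B : Submodule R M} (hA : EssentialIn A ⊤) (hB : EssentialIn B ⊤) :
    EssentialIn (A ⊓ B) ⊤ :=
  ⟨le_top, fun K _ hABK => hB.2 K le_top (hA.2 (B ⊓ K) le_top (by rwa [← inf_assoc]))⟩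

theorem EssentialIn.finsetInf {ι : Type*} {s : Finset ι} {A : ι → Submodule R M}
    (h : ∀ i ∈ s, EssentialIn (A i) ⊤) : EssentialIn (s.inf A) ⊤ := by
  classical
  induction s using Finset.induction_on with
  | empty => exact ⟨le_top, fun K _ hK => by simpa using hK⟩
  | insert i s _ ih =>
    rw [Finset.inf_insert]
    exact (h i (by simp)).inf (ih fun j hj => h j (by simp [hj]))

theorem EssentialIn.comap {A N : Submodule R M} (h : EssentialIn A N) (f : M₂ →ₗ[R] M)
    (hf : range f ≤ N) : EssentialIn (A.comap f) ⊤ := by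
  refine (essentialIn_iff le_top).mpr fun x _ hx0 => ?_
  by_cases hfx : f x = 0
  · exact ⟨1, by simp [hfx], by simpa using hx0⟩
  obtain ⟨r, hrA, hr0⟩ := (essentialIn_iff h.1).mp h (f x) (hf (mem_range_self f x)) hfx
  exact ⟨r, by simpa using hrA, fun h0 => hr0 (by rw [← map_smul, h0, map_zero])⟩

theorem EssentialIn.of_inf_le {A B N : Submodule R M} (hA : EssentialIn A ⊤) (hBN : B ≤ N)
    (h : A ⊓ N ≤ B) : EssentialIn B N := by
  refine (essentialIn_iff hBN).mpr fun x hx hx0 => ?_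
  obtain ⟨r, hrA, hr0⟩ := (essentialIn_iff le_top).mp hA x trivial hx0
  exact ⟨r, h ⟨hrA, N.smul_mem r hx⟩, hr0⟩

theorem SmallIn.mono {S S' : Submodule R M} (h : SmallIn S ⊤) (hS' : S' ≤ S) :
    SmallIn S' ⊤ :=
  ⟨le_top, fun L hL hS'L => h.2 L hL (top_unique (hS'L ▸ sup_le_sup_right hS' L))⟩

theorem SmallIn.top {S K : Submodule R M} (h : SmallIn S K) : SmallIn S ⊤ := by
  refine ⟨le_top, fun L _ hSL => ?_⟩
  have hKL : K ≤ L := by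
    rw [← h.2 (L ⊓ K) inf_le_right (by rw [← sup_inf_assoc_of_le L h.1, hSL, top_inf_eq])]
    exact inf_le_left
  exact top_unique (hSL ▸ sup_le (h.1.trans hKL) le_rfl)

theorem SmallIn.of_isCompl {S D K : Submodule R M} (h : SmallIn S ⊤) (hSK : S ≤ K)
    (hc : IsCompl D K) : SmallIn S K := by
  refine ⟨hSK, fun L hLK hSL => ?_⟩
  have hLD : L ⊔ D = ⊤ := h.2 _ le_top (by rw [← sup_assoc, hSL, hc.symm.sup_eq_top])
  rw [← sup_bot_eq L, ← hc.inf_eq_bot, ← sup_inf_assoc_of_le D hLK, hLD, top_inf_eq]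

theorem SmallIn.eq_bot_of_isCompl {D C : Submodule R M} (h : SmallIn D ⊤) (hc : IsCompl D C) :
    D = ⊥ := by
  rw [← hc.inf_eq_bot, h.2 C le_top hc.sup_eq_top, inf_top_eq]

end Essential

section Singular

variable (R : Type*) [Ring R] (M : Type*) [AddCommGroup M] [Module R M]

/-- The singular submodule `Z(M)`. -/
def singularSubmodule : Submodule R M where
  carrier := {x | EssentialIn (ker (toSpanSingleton R M x)) ⊤}
  zero_mem' := by simpa using ⟨le_top, fun K _ hK => by simpa using hK⟩
  add_mem' {x y} hx hy := (EssentialIn.inf hx hy).mono fun r hr => by simp_all [smul_add]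
  smul_mem' c x hx := by
    change EssentialIn _ ⊤
    convert hx.comap (toSpanSingleton R R c) le_top using 1
    ext r
    simp [mul_smul]

variable {R M} {M₂ : Type*} [AddCommGroup M₂] [Module R M₂]

theorem mem_singularSubmodule {x : M} :
    x ∈ singularSubmodule R M ↔ EssentialIn (ker (toSpanSingleton R M x)) ⊤ :=
  Iff.rfl

theorem isSingularModule_iff_le {B : Submodule R M} :
    IsSingularModule R B ↔ B ≤ singularSubmodule R M := by
  have hker (x : B) : ker (toSpanSingleton R B x) = ker (toSpanSingleton R M x) := by
    ext r
    simp [Subtype.ext_iff]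
  exact ⟨fun h x hx => by simpa [hker, mem_singularSubmodule] using h ⟨x, hx⟩,
    fun h x => by rw [hker]; exact h x.2⟩

theorem map_le_singularSubmodule (f : M →ₗ[R] M₂) :
    (singularSubmodule R M).map f ≤ singularSubmodule R M₂ := by
  rintro _ ⟨x, hx, rfl⟩
  exact (mem_singularSubmodule.mp hx).mono fun r hr => by simp_all [← map_smul]

theorem range_le_singularSubmodule_of_essentialIn_ker (f : M →ₗ[R] M₂)
    (hf : EssentialIn (ker f) ⊤) : range f ≤ singularSubmodule R M₂ := by
  rintro _ ⟨x, rfl⟩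
  rw [mem_singularSubmodule, ← comp_toSpanSingleton, ker_comp]
  exact hf.comap _ le_top

/-- Map `x` into the free module `M →₀ R` by a splitting and annihilate its finitely many
coordinates at once. -/
theorem essentialIn_ker_of_range_le_singularSubmodule [Module.Projective R M]
    (f : M →ₗ[R] M₂) (hf : range f ≤ singularSubmodule R M₂) :
    EssentialIn (ker f) ⊤ := by
  obtain ⟨s, hs⟩ := Module.Projective.out (R := R) (P := M)
  refine (essentialIn_iff le_top).mpr fun x _ hx0 => ?_
  have hG : EssentialIn ((s x).support.inf fun p =>
      (ker (toSpanSingleton R M₂ (f p))).comap (Finsupp.lapply p)) ⊤ :=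
    EssentialIn.finsetInf fun p _ =>
      (mem_singularSubmodule.mp (hf (mem_range_self f p))).comap _ le_top
  have hsx : s x ≠ 0 := fun h => hx0 (by rw [← hs x, h, map_zero])
  obtain ⟨r, hrG, hr0⟩ := (essentialIn_iff le_top).mp hG (s x) trivial hsx
  refine ⟨r, ?_, fun h => hr0 (by rw [← map_smul, h, map_zero])⟩
  rw [mem_ker, ← hs (r • x), map_smul s, Finsupp.linearCombination_apply, map_finsuppSum]
  refine Finset.sum_eq_zero fun p hp => ?_
  simpa using mem_finsetInf.mp hrG p (Finsupp.support_smul hp)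

end Singular

section Summands

variable {R : Type*} [Ring R] {M : Type*} [AddCommGroup M] [Module R M]

theorem map_one_sub_le_singularSubmodule {e : Module.End R M} (he : IsIdempotentElem e)
    {B : Submodule R M} (hB : B ≤ singularSubmodule R M) :
    (range e ⊔ B).map (1 - e) ≤ singularSubmodule R M := by
  rw [Submodule.map_sup, ← range_comp, show (1 - e) ∘ₗ e = 0 from he.one_sub_mul_self,
    range_zero, bot_sup_eq]
  exact (map_mono hB).trans (map_le_singularSubmodule _)

/-- `1 - e` maps `N` into `Z(M)` and has kernel `range e`, so `range e` is essential in the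
projective module `N` and leaves no room for `B`. -/
theorem eq_bot_of_sup_eq_of_projective {N B : Submodule R M} [Module.Projective R N]
    {e : Module.End R M} (he : IsIdempotentElem e) (hB : B ≤ singularSubmodule R M)
    (hdisj : range e ⊓ B = ⊥) (hsup : range e ⊔ B = N) : B = ⊥ := by
  have hker := essentialIn_ker_of_range_le_singularSubmodule ((1 - e) ∘ₗ N.subtype) (by
    rw [range_comp, range_subtype, ← hsup]
    exact map_one_sub_le_singularSubmodule he hB)
  have hBN : B.comap N.subtype = ⊥ := hker.2 _ le_top (by
    rw [ker_comp, ← he.range_eq_ker_one_sub, ← comap_inf, hdisj, comap_bot, ker_subtype])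
  rw [← inf_eq_right.mpr (hsup ▸ le_sup_right : B ≤ N), ← map_comap_subtype, hBN,
    Submodule.map_bot]

theorem range_projection_comp_eq {M₂ : Type*} [AddCommGroup M₂] [Module R M₂]
    {φ : M₂ →ₗ[R] M} {D C : Submodule R M} (hc : IsCompl D C) (hD : D ≤ range φ) :
    range (C.projection D hc.symm ∘ₗ φ) = range φ ⊓ C := by
  rw [range_comp]
  refine le_antisymm ?_ fun y ⟨hy, hyC⟩ => ⟨y, hy, projection_apply_of_mem_left hc.symm hyC⟩
  rintro _ ⟨y, hy, rfl⟩
  refine ⟨?_, projection_apply_mem _ y⟩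
  rw [projection_eq_self_sub_projection hc]
  exact sub_mem hy (hD (projection_apply_mem hc y))

variable [Module.Projective R M]

theorem exists_isIdempotentElem_range_eq_ker {e g : Module.End R M} (he : IsIdempotentElem e)
    (hg : range g = range e) : ∃ w : Module.End R M, IsIdempotentElem w ∧ range w = ker g := by
  obtain ⟨σ, hσ⟩ := Module.projective_lifting_property g.rangeRestrict
    (e.codRestrict (range g) fun x => hg ▸ mem_range_self e x) (surjective_rangeRestrict g)
  have hgσ : g ∘ₗ σ = e := by
    ext x
    exact congrArg Subtype.val (LinearMap.congr_fun hσ x)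
  have heg : e ∘ₗ g = g := (he.comp_eq_right_iff g).mpr hg.le
  have hk : IsIdempotentElem (σ ∘ₗ g) := by
    change (σ ∘ₗ g) ∘ₗ (σ ∘ₗ g) = σ ∘ₗ g
    rw [comp_assoc, ← comp_assoc g, hgσ, heg]
  have hker : ker (σ ∘ₗ g) = ker g := by
    refine le_antisymm (fun x hx => ?_) (ker_le_ker_comp g σ)
    rw [mem_ker, ← heg, ← hgσ, comp_apply, comp_apply, ← comp_apply σ g, mem_ker.mp hx,
      map_zero]
  exact ⟨1 - σ ∘ₗ g, hk.one_sub, by rw [← hk.ker_eq_range_one_sub, hker]⟩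

theorem injective_one_sub_of_range_le_singularSubmodule {z : Module.End R M}
    (hz : range z ≤ singularSubmodule R M) : Function.Injective ⇑(1 - z) := by
  rw [← ker_eq_bot]
  refine (essentialIn_ker_of_range_le_singularSubmodule z hz).2 _ le_top (eq_bot_iff.mpr ?_)
  rintro x ⟨hzx, hx⟩
  simp_all

theorem range_eq_bot_of_isIdempotentElem {w : Module.End R M} (hw : IsIdempotentElem w)
    (h : range w ≤ singularSubmodule R M) : range w = ⊥ :=
  (essentialIn_ker_of_range_le_singularSubmodule w h).2 _ le_top hw.isCompl.symm.inf_eq_bot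

end Summands

section SummandPlusSingular

variable {R : Type*} [Ring R] {M : Type*} [AddCommGroup M] [Module R M]

def IsSummandPlusSingular (N : Submodule R M) : Prop :=
  ∃ (e : Module.End R M) (M' : Submodule R M), IsIdempotentElem e ∧ range e ⊓ M' = ⊥ ∧
    range e ⊔ M' = N ∧ IsSingularModule R M'

variable (R M) in
/-- Condition (1) of the theorem. -/
def RangesAreSummandPlusSingular : Prop :=
  ∀ φ : Module.End R M, IsSummandPlusSingular (range φ)

theorem isSummandPlusSingular_range_of_isCompl {φ : Module.End R M} {D C : Submodule R M}
    (hc : IsCompl D C) (hD : D ≤ range φ)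
    (hess : EssentialIn (ker (C.projection D hc.symm ∘ₗ φ)) ⊤) :
    IsSummandPlusSingular (range φ) := by
  refine ⟨D.projection C hc, range φ ⊓ C, isIdempotentElem_projection hc, ?_, ?_, ?_⟩
  · rw [range_projection]
    exact disjoint_iff.mp (hc.disjoint.mono_right inf_le_right)
  · rw [range_projection, inf_comm, ← sup_inf_assoc_of_le C hD, hc.sup_eq_top, top_inf_eq]
  · rw [isSingularModule_iff_le, ← range_projection_comp_eq hc hD]
    exact range_le_singularSubmodule_of_essentialIn_ker _ hess

theorem rangesAreSummandPlusSingular_of_isCSRickart_of_isC2 (hcs : IsCSRickart R M)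
    (hc2 : IsC2 R M) : RangesAreSummandPlusSingular R M := by
  intro φ
  obtain ⟨e, he, hker⟩ := hcs φ
  set f := φ ∘ₗ (ker e).subtype
  have hf : Function.Injective f := by
    rw [← ker_eq_bot, ker_comp, eq_bot_iff]
    intro x hx
    have hx' : (x : M) ∈ range e ⊓ ker e := ⟨hker.1 hx, x.2⟩
    rw [he.isCompl.inf_eq_bot, mem_bot] at hx'
    exact (mem_bot R).mpr (Subtype.ext hx')
  obtain ⟨C, hDC⟩ := hc2 (range f) (ker e) ⟨range e, he.isCompl.symm⟩
    ⟨(LinearEquiv.ofInjective f hf).symm⟩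
  refine isSummandPlusSingular_range_of_isCompl hDC (range_comp_le_range _ _)
    ((hker.comap e le_rfl).mono fun x hx => ?_)
  have hφx : φ x ∈ range f := by
    refine ⟨⟨x - e x, ?_⟩, ?_⟩
    · simp [← Module.End.mul_apply, he.eq]
    · simp [f, (mem_ker.mp hx : φ (e x) = 0)]
  exact projection_apply_of_mem_right hDC.symm hφx

theorem rangesAreSummandPlusSingular_of_isDCSRickart (hd : IsDCSRickart R M)
    (h : ∀ f : Module.End R M, SmallIn (range f) ⊤ → EssentialIn (ker f) ⊤) :
    RangesAreSummandPlusSingular R M := by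
  intro φ
  obtain ⟨D, C, hc, hD, hsmall⟩ := hd φ
  exact isSummandPlusSingular_range_of_isCompl hc hD
    (h _ (by rw [range_projection_comp_eq hc hD]; exact hsmall.top))

namespace RangesAreSummandPlusSingular

theorem exists_isIdempotentElem_range_eq (h1 : RangesAreSummandPlusSingular R M)
    (φ : Module.End R M) [Module.Projective R (range φ)] :
    ∃ e : Module.End R M, IsIdempotentElem e ∧ range φ = range e := by
  obtain ⟨e, M', he, hdisj, hsup, hsing⟩ := h1 φ
  refine ⟨e, he, ?_⟩
  rw [← hsup, eq_bot_of_sup_eq_of_projective he (isSingularModule_iff_le.mp hsing) hdisj hsup,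
    sup_bot_eq]

variable [Module.Projective R M]

theorem isCSRickart (h1 : RangesAreSummandPlusSingular R M) : IsCSRickart R M := by
  intro φ
  obtain ⟨e, M', he, -, hsup, hsing⟩ := h1 φ
  have hrange : range (e ∘ₗ φ) = range e := by
    refine le_antisymm (range_comp_le_range _ _) fun x hx => ?_
    obtain ⟨y, hy⟩ := (hsup ▸ le_sup_left : range e ≤ range φ) hx
    exact ⟨y, by simp [hy, he.mem_range_iff.mp hx]⟩
  obtain ⟨w, hw, hwker⟩ := exists_isIdempotentElem_range_eq_ker he hrange
  -- `φ = eφ + (1 - e)φ`, and `(1 - e)φ` takes values in `Z(M)`.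
  have hz : EssentialIn (ker ((1 - e) ∘ₗ φ)) ⊤ :=
    essentialIn_ker_of_range_le_singularSubmodule _ (by
      rw [range_comp, ← hsup]
      exact map_one_sub_le_singularSubmodule he (isSingularModule_iff_le.mp hsing))
  refine ⟨w, hw, hwker ▸ hz.of_inf_le (ker_le_ker_comp φ e) ?_⟩
  rintro x ⟨h1x, h2x⟩
  have hφx : φ x - e (φ x) = 0 := h1x
  exact (sub_eq_zero.mp hφx).trans h2x

theorem isC2 (h1 : RangesAreSummandPlusSingular R M) : IsC2 R M := by
  rintro N D ⟨C, hc⟩ ⟨g⟩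
  have : Module.Projective R D :=
    .of_split D.subtype (D.projectionOnto C hc) (projectionOnto_comp_subtype hc)
  have : Module.Projective R N := .of_equiv g.symm
  set φ : Module.End R M := N.subtype ∘ₗ g.symm.toLinearMap ∘ₗ D.projectionOnto C hc
  have hφ : range φ = N := by
    rw [range_comp_of_range_eq_top _ (by
      rw [range_comp_of_range_eq_top _ (range_projectionOnto hc), LinearEquiv.range]),
      range_subtype]
  have : Module.Projective R (range φ) := by
    rw [hφ]
    infer_instance
  obtain ⟨e, he, hφe⟩ := h1.exists_isIdempotentElem_range_eq φ
  exact ⟨ker e, hφ ▸ hφe ▸ he.isCompl⟩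

theorem surjective_one_sub (h1 : RangesAreSummandPlusSingular R M) {z : Module.End R M}
    (hz : range z ≤ singularSubmodule R M) : Function.Surjective ⇑(1 - z) := by
  have : Module.Projective R (range (1 - z)) :=
    .of_equiv (LinearEquiv.ofInjective _ (injective_one_sub_of_range_le_singularSubmodule hz))
  obtain ⟨e, he, hψe⟩ := h1.exists_isIdempotentElem_range_eq (1 - z)
  -- `(1 - e)(1 - z) = 0`, so `1 - e = (1 - e) z` is an idempotent with singular range.
  have hrange : range (1 - e) ≤ singularSubmodule R M := by
    rintro _ ⟨x, rfl⟩
    have hψx := he.mem_range_iff.mp (hψe ▸ mem_range_self (1 - z) x)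
    have hx : (1 - e) x = (1 - e) (z x) := by
      simp only [LinearMap.sub_apply, Module.End.one_apply, map_sub] at hψx ⊢
      rw [← sub_eq_zero] at hψx ⊢
      rw [← neg_eq_zero, ← hψx]
      abel
    rw [hx]
    exact map_le_singularSubmodule _ ⟨z x, hz (mem_range_self z x), rfl⟩
  have he1 : 1 - e = 0 := range_eq_bot.mp (range_eq_bot_of_isIdempotentElem he.one_sub hrange)
  rw [← range_eq_top, hψe, he.range_eq_ker_one_sub, he1, ker_zero]

theorem smallIn_top (h1 : RangesAreSummandPlusSingular R M) {S : Submodule R M}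
    (hS : S ≤ singularSubmodule R M) : SmallIn S ⊤ := by
  refine ⟨le_top, fun L _ hSL => ?_⟩
  obtain ⟨σ, hσ⟩ := Module.projective_lifting_property (S.subtype.coprod L.subtype)
    LinearMap.id (by rw [← range_eq_top, range_coprod, range_subtype, range_subtype, hSL])
  -- `x = α x + (x - α x)` with `α x ∈ S` and `x - α x ∈ L`; and `1 - α` is onto.
  set α := S.subtype ∘ₗ LinearMap.fst R S L ∘ₗ σ
  have hL (x : M) : (1 - α) x ∈ L := by
    have hx : ((σ x).1 : M) + (σ x).2 = x := by simpa using LinearMap.congr_fun hσ x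
    have hαx : (1 - α) x = (σ x).2 := by
      simp only [LinearMap.sub_apply, Module.End.one_apply, α, comp_apply, fst_apply,
        subtype_apply]
      exact sub_eq_of_eq_add' hx.symm
    exact hαx ▸ (σ x).2.2
  have hα : range α ≤ singularSubmodule R M :=
    ((range_comp_le_range _ _).trans (range_subtype S).le).trans hS
  exact top_unique fun x _ => (h1.surjective_one_sub hα x).choose_spec ▸ hL _

theorem isDCSRickart (h1 : RangesAreSummandPlusSingular R M) : IsDCSRickart R M := by
  intro φ
  obtain ⟨e, M', he, -, hsup, hsing⟩ := h1 φ
  refine ⟨range e, ker e, he.isCompl, hsup ▸ le_sup_left,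
    (h1.smallIn_top ?_).of_isCompl inf_le_right he.isCompl⟩
  calc range φ ⊓ ker e ≤ (range φ).map (1 - e) := fun x ⟨hx, hxe⟩ =>
        ⟨x, hx, by simp [mem_ker.mp hxe]⟩
    _ ≤ singularSubmodule R M :=
        hsup ▸ map_one_sub_le_singularSubmodule he (isSingularModule_iff_le.mp hsing)

theorem essentialIn_ker_iff_smallIn_range (h1 : RangesAreSummandPlusSingular R M)
    (f : Module.End R M) : EssentialIn (ker f) ⊤ ↔ SmallIn (range f) ⊤ := by
  refine ⟨fun hf => h1.smallIn_top (range_le_singularSubmodule_of_essentialIn_ker f hf),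
    fun hf => ?_⟩
  obtain ⟨e, M', he, -, hsup, hsing⟩ := h1 f
  have hbot : range e = ⊥ := (hf.mono (hsup ▸ le_sup_left)).eq_bot_of_isCompl he.isCompl
  refine essentialIn_ker_of_range_le_singularSubmodule f ?_
  rw [← hsup, hbot, bot_sup_eq]
  exact isSingularModule_iff_le.mp hsing

end RangesAreSummandPlusSingular

end SummandPlusSingular

/-- For a projective module `P`, the following are equivalent:
(1) the image of every endomorphism is `eP ⊕ P'` with `e` idempotent and `P'` singular;
(2) `P` is CS-Rickart and satisfies C₂;
(3) `P` is d-CS-Rickart and `Δ(P) = ∇(P)`. -/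
theorem projective_csRickart_c2_iff_dcsRickart_delta_nabla
    {R : Type*} [Ring R] {P : Type*} [AddCommGroup P] [Module R P]
    (hP : Module.Projective R P) :
    ((∀ φ : Module.End R P, ∃ (e : Module.End R P) (P' : Submodule R P),
        IsIdempotentElem e ∧ LinearMap.range e ⊓ P' = ⊥ ∧
        LinearMap.range e ⊔ P' = LinearMap.range φ ∧ IsSingularModule R P') ↔
      (IsCSRickart R P ∧ IsC2 R P)) ∧
    ((IsCSRickart R P ∧ IsC2 R P) ↔
      (IsDCSRickart R P ∧
        {f : Module.End R P | EssentialIn (LinearMap.ker f) (⊤ : Submodule R P)} =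
          {f : Module.End R P | SmallIn (LinearMap.range f) (⊤ : Submodule R P)})) := by
  have := hP
  have h12 (h1 : RangesAreSummandPlusSingular R P) : IsCSRickart R P ∧ IsC2 R P :=
    ⟨h1.isCSRickart, h1.isC2⟩
  have h21 (h2 : IsCSRickart R P ∧ IsC2 R P) : RangesAreSummandPlusSingular R P :=
    rangesAreSummandPlusSingular_of_isCSRickart_of_isC2 h2.1 h2.2
  refine ⟨⟨h12, h21⟩, fun h2 => ⟨(h21 h2).isDCSRickart, ?_⟩,
    fun ⟨hd, hsets⟩ => h12 ?_⟩
  · exact Set.ext fun f => (h21 h2).essentialIn_ker_iff_smallIn_range f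
  · exact rangesAreSummandPlusSingular_of_isDCSRickart hd fun f hf =>
      (Set.ext_iff.mp hsets f).mpr hf

end CSRickartPaper
end

section
/- For a ring R, the following conditions are equivalent: (1) R is a semiregular ring; (2) every finitely generated projective right R-module is a d-CS-Rickart module. -/
/-!
Write `J` for the Jacobson radical. Applied to `R` itself and the endomorphism `x ↦ x a`,
the d-CS-Rickart property says that the left ideal `R a` lies above a summand `R e`; this yields
an idempotent `e ∈ R a` with `a - a e ∈ J`, and having such idempotents for every `a` is
equivalent to semiregularity (lift an idempotent of `R/J` close to `b a`, where `a b a ≡ a`).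

Conversely, over a semiregular ring these idempotents can be combined along the generators of a
finitely generated left ideal `I`, giving `R = R e ⊕ R (1 - e)` with `R e ≤ I` and
`I ∩ R (1 - e) ≤ J`. This splitting of finitely generated submodules modulo the radical passes
to products of projective modules, by lifting the summand found in one factor, and to retracts;
so it holds in every finitely generated projective module, where the radical is small and the
splitting of the image of an endomorphism says that this image lies above a summand.
-/

namespace CSRickartPaper

universe u

section Lattice

variable {α : Type*} [Lattice α] [BoundedOrder α] [IsModularLattice α]

theorem isCompl_sup_inf_of_le {a b c d : α} (hab : IsCompl a b) (hcd : IsCompl c d)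
    (hcb : c ≤ b) : IsCompl (a ⊔ c) (d ⊓ b) := by
  have hb : c ⊔ d ⊓ b = b := by rw [← sup_inf_assoc_of_le d hcb, hcd.sup_eq_top, top_inf_eq]
  exact Disjoint.isCompl_sup_left_of_isCompl_sup_right (hcd.disjoint.mono_right inf_le_left)
    (by rwa [hb])

end Lattice

section Small

variable {R : Type*} [Ring R] {M : Type*} [AddCommGroup M] [Module R M]

theorem SmallIn.le_jacobson {S K : Submodule R M} (h : SmallIn S K) :
    S ≤ Module.jacobson R M := by
  refine le_sInf fun m hm => ?_
  by_contra hSm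
  have hSm_top : S ⊔ m = ⊤ := hm.2 _ (lt_of_le_of_ne le_sup_right fun he => hSm (he ▸ le_sup_left))
  have hK : S ⊔ m ⊓ K = K := by rw [← sup_inf_assoc_of_le m h.1, hSm_top, top_inf_eq]
  exact hSm (h.1.trans (inf_eq_right.mp (h.2 _ inf_le_right hK)))

theorem smallIn_of_le_jacobson [IsCoatomic (Submodule R M)] {A K S : Submodule R M}
    (hAK : IsCompl A K) (hSK : S ≤ K) (hS : S ≤ Module.jacobson R M) : SmallIn S K := by
  refine ⟨hSK, fun L hLK hSL => ?_⟩
  have hAL : A ⊔ L = ⊤ := by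
    obtain h | ⟨m, hm, hALm⟩ := eq_top_or_exists_le_coatom (A ⊔ L)
    · exact h
    have hKm : K ≤ m := hSL ▸ sup_le (hS.trans (sInf_le hm)) (le_sup_right.trans hALm)
    exact absurd (top_le_iff.mp (hAK.sup_eq_top ▸ sup_le (le_sup_left.trans hALm) hKm)) hm.1
  calc L = L ⊔ A ⊓ K := by rw [hAK.inf_eq_bot, sup_bot_eq]
    _ = (L ⊔ A) ⊓ K := (sup_inf_assoc_of_le A hLK).symm
    _ = K := by rw [sup_comm, hAL, top_inf_eq]

end Small

section Splitting

variable {R : Type*} [Ring R] {M : Type*} [AddCommGroup M] [Module R M]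
  {M₁ M₂ P : Type*} [AddCommGroup M₁] [Module R M₁] [AddCommGroup M₂] [Module R M₂]
  [AddCommGroup P] [Module R P]

/-- For finite `M` this is equivalent to `LiesAboveSummand N`, but unlike smallness, membership
in the radical is preserved by linear maps. -/
def SplitsModJacobson (N : Submodule R M) : Prop :=
  ∃ A B : Submodule R M, IsCompl A B ∧ A ≤ N ∧ N ⊓ B ≤ Module.jacobson R M

variable (R M) in
def FGSplitModJacobson : Prop :=
  ∀ N : Submodule R M, N.FG → SplitsModJacobson N

theorem SplitsModJacobson.liesAboveSummand [IsCoatomic (Submodule R M)] {N : Submodule R M}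
    (h : SplitsModJacobson N) : LiesAboveSummand N :=
  let ⟨A, B, hAB, hAN, hNB⟩ := h
  ⟨A, B, hAB, hAN, smallIn_of_le_jacobson hAB inf_le_right hNB⟩

theorem FGSplitModJacobson.isDCSRickart [Module.Finite R M] (h : FGSplitModJacobson R M) :
    IsDCSRickart R M := fun φ =>
  (h _ (LinearMap.range_eq_map φ ▸ (Module.Finite.fg_top).map φ)).liesAboveSummand

theorem fg_inf_of_isCompl {N C Q : Submodule R M} (hN : N.FG) (hCQ : IsCompl C Q)
    (hCN : C ≤ N) : (N ⊓ Q).FG := by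
  suffices N ⊓ Q = N.map (Q.projection C hCQ.symm) from this ▸ hN.map _
  refine le_antisymm (fun x hx => ⟨x, hx.1, Submodule.projection_apply_of_mem_left _ hx.2⟩) ?_
  rintro _ ⟨x, hx, rfl⟩
  refine ⟨?_, Submodule.projection_apply_mem _ x⟩
  rw [← sub_sub_cancel x (Q.projection C hCQ.symm x)]
  exact sub_mem hx (hCN (Submodule.sub_projection_mem _ x))

theorem isCompl_range_comap {f : M →ₗ[R] M₂} {A B : Submodule R M₂} (hAB : IsCompl A B)
    {ρ : A →ₗ[R] M} (hρ : ∀ a, f (ρ a) = a) : IsCompl (LinearMap.range ρ) (B.comap f) := by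
  refine ⟨Submodule.disjoint_def.mpr fun _ ⟨a, ha⟩ hB => ?_,
    codisjoint_iff.mpr (eq_top_iff.mpr fun y _ => ?_)⟩
  · subst ha
    obtain rfl : a = 0 := Submodule.coe_eq_zero.mp (hAB.disjoint.le_bot ⟨a.2, hρ a ▸ hB⟩)
    exact map_zero ρ
  · have hy : f y ∈ A ⊔ B := hAB.sup_eq_top ▸ Submodule.mem_top
    obtain ⟨a, ha, b, hb, hab⟩ := Submodule.mem_sup.mp hy
    refine Submodule.mem_sup.mpr ⟨ρ ⟨a, ha⟩, ⟨⟨a, ha⟩, rfl⟩, y - ρ ⟨a, ha⟩, ?_, add_sub_cancel _ _⟩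
    rwa [Submodule.mem_comap, map_sub, hρ, ← hab, add_sub_cancel_left]

theorem FGSplitModJacobson.of_retract (h : FGSplitModJacobson R M) (σ : M →ₗ[R] P)
    (s : P →ₗ[R] M) (hσs : σ ∘ₗ s = LinearMap.id) : FGSplitModJacobson R P := by
  intro N hN
  obtain ⟨A, B, hAB, hAN, hNB⟩ := h _ (hN.map s)
  have hσs' (x : P) : σ (s x) = x := LinearMap.congr_fun hσs x
  have hsσ (a : A) : s (σ a) = a := by
    obtain ⟨n, -, hn⟩ := hAN a.2
    rw [← hn, hσs']
  refine ⟨LinearMap.range (σ ∘ₗ A.subtype), B.comap s, isCompl_range_comap hAB hsσ, ?_, ?_⟩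
  · rintro _ ⟨a, rfl⟩
    obtain ⟨n, hn, hna⟩ := hAN a.2
    simpa [← hna, hσs'] using hn
  · rintro x ⟨hxN, hxB⟩
    rw [← hσs' x]
    exact Module.map_jacobson_le σ (Submodule.mem_map_of_mem (hNB ⟨⟨x, hxN, rfl⟩, hxB⟩))

theorem exists_le_isCompl_comap [Module.Projective R M₂] (f : M →ₗ[R] M₂) {N : Submodule R M}
    {A B : Submodule R M₂} (hAB : IsCompl A B) (hAN : A ≤ N.map f) :
    ∃ C ≤ N, IsCompl C (B.comap f) := by
  have : Module.Projective R A :=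
    .of_split A.subtype (A.projectionOnto B hAB) (Submodule.projectionOnto_comp_subtype hAB)
  obtain ⟨ρ, hρ⟩ := Module.projective_lifting_property (f.submoduleMap N)
    (Submodule.inclusion hAN) (f.submoduleMap_surjective N)
  exact ⟨LinearMap.range (N.subtype ∘ₗ ρ), fun _ ⟨a, ha⟩ => ha ▸ (ρ a).2,
    isCompl_range_comap hAB fun a => congrArg Subtype.val (LinearMap.congr_fun hρ a)⟩

theorem prod_jacobson_le_jacobson_prod :
    (Module.jacobson R M₁).prod (Module.jacobson R M₂) ≤ Module.jacobson R (M₁ × M₂) := by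
  rintro ⟨x₁, x₂⟩ ⟨h₁, h₂⟩
  rw [← Prod.fst_add_snd (x₁, x₂)]
  exact add_mem (Module.map_jacobson_le (LinearMap.inl R M₁ M₂) (Submodule.mem_map_of_mem h₁))
    (Module.map_jacobson_le (LinearMap.inr R M₁ M₂) (Submodule.mem_map_of_mem h₂))

theorem FGSplitModJacobson.prod [Module.Projective R M₁] [Module.Projective R M₂]
    (h₁ : FGSplitModJacobson R M₁) (h₂ : FGSplitModJacobson R M₂) :
    FGSplitModJacobson R (M₁ × M₂) := by
  intro N hN
  let π₁ := LinearMap.fst R M₁ M₂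
  let π₂ := LinearMap.snd R M₁ M₂
  obtain ⟨A₂, B₂, hAB₂, hA₂, hN₂⟩ := h₂ _ (hN.map π₂)
  obtain ⟨C₂, hC₂N, hC₂⟩ := exists_le_isCompl_comap π₂ hAB₂ hA₂
  -- `N = C₂ ⊕ N'` with `N' ≤ M₁ × B₂`; it remains to split the image of `N'` in `M₁`
  set N' := N ⊓ B₂.comap π₂
  obtain ⟨A₁, B₁, hAB₁, hA₁, hN₁⟩ := h₁ _ ((fg_inf_of_isCompl hN hC₂ hC₂N).map π₁)
  obtain ⟨C₁, hC₁N', hC₁⟩ := exists_le_isCompl_comap π₁ hAB₁ hA₁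
  refine ⟨C₂ ⊔ C₁, B₁.comap π₁ ⊓ B₂.comap π₂,
    isCompl_sup_inf_of_le hC₂ hC₁ (hC₁N'.trans inf_le_right),
    sup_le hC₂N (hC₁N'.trans inf_le_left), ?_⟩
  rintro x ⟨hxN, hx₁, hx₂⟩
  exact prod_jacobson_le_jacobson_prod ⟨hN₁ ⟨Submodule.mem_map_of_mem ⟨hxN, hx₂⟩, hx₁⟩,
    hN₂ ⟨Submodule.mem_map_of_mem hxN, hx₂⟩⟩

end Splitting

section RingLevel

variable {R : Type*} [Ring R]

local notation "π" => Ideal.Quotient.mk (Ring.jacobson R)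

theorem jacRad_eq_jacobson : jacRad R = Ring.jacobson R := Ideal.jacobson_bot

/-- The left ideal `I` lies above the summand `R e` of `R` modulo `J(R)`. -/
def LiesAboveIdempotent (I : Submodule R R) (e : R) : Prop :=
  IsIdempotentElem e ∧ e ∈ I ∧ ∀ x ∈ I, x - x * e ∈ Ring.jacobson R

theorem isUnit_one_sub_of_mem_jacobson {x : R} (hx : x ∈ Ring.jacobson R) : IsUnit (1 - x) := by
  have hleft {y : R} (hy : y ∈ Ring.jacobson R) : ∃ s, s * (1 - y) = 1 := by
    obtain ⟨s, hs⟩ := Ideal.exists_mul_sub_mem_of_sub_one_mem_jacobson (I := ⊥) (1 - y)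
      (by simpa [Ideal.jacobson_bot] using neg_mem hy)
    exact ⟨s, sub_eq_zero.mp ((Submodule.mem_bot R).mp hs)⟩
  obtain ⟨s, hs⟩ := hleft hx
  -- `s = 1 - (-s x)` has a left inverse as well, which must then be `1 - x`
  obtain ⟨w, hw⟩ := hleft (neg_mem ((Ring.jacobson R).mul_mem_left s hx))
  have hs' : 1 - -(s * x) = s := by rw [← hs]; noncomm_ring
  have hws : w * s = 1 := hs' ▸ hw
  have hw' : w = 1 - x :=
    calc w = w * (s * (1 - x)) := by rw [hs, mul_one]
      _ = 1 - x := by rw [← mul_assoc, hws, one_mul]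
  exact ⟨⟨1 - x, s, hw' ▸ hws, hs⟩, rfl⟩

theorem liesAboveIdempotent_span_singleton {a e : R} (he : IsIdempotentElem e)
    (hea : e ∈ Submodule.span R {a}) (ha : a - a * e ∈ Ring.jacobson R) :
    LiesAboveIdempotent (Submodule.span R {a}) e := by
  refine ⟨he, hea, fun x hx => ?_⟩
  obtain ⟨r, rfl⟩ := Submodule.mem_span_singleton.mp hx
  simpa [mul_sub, mul_assoc] using (Ring.jacobson R).mul_mem_left r ha

theorem IsSemiregularRing.exists_liesAboveIdempotent (h : IsSemiregularRing R) (a : R) :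
    ∃ e, LiesAboveIdempotent (Submodule.span R {a}) e := by
  rw [IsSemiregularRing, jacRad_eq_jacobson] at h
  obtain ⟨b, hb⟩ := h.1 a
  obtain ⟨g, hg, hgba⟩ := h.2 (b * a) <| by
    simpa [mul_sub, mul_assoc] using (Ring.jacobson R).mul_mem_left b hb
  -- `g` lifts `ba`; conjugating it by a unit `u ≡ 1` moves it into `Ra` since `g u = g b a`
  have hd : g - g * (b * a) ∈ Ring.jacobson R := by
    simpa [mul_sub, ← mul_assoc, hg.eq] using (Ring.jacobson R).mul_mem_left g hgba
  obtain ⟨u, hu⟩ := isUnit_one_sub_of_mem_jacobson hd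
  have hgu : g * u = g * b * a := by
    rw [hu, mul_sub, mul_one, mul_sub, ← mul_assoc g g, hg.eq]
    noncomm_ring
  have hπu : π u = 1 := by
    rw [hu, map_sub, map_one, Ideal.Quotient.eq_zero_iff_mem.mpr hd, sub_zero]
  have hπu' : π ↑u⁻¹ = 1 := by
    have := congrArg π (Units.inv_mul u)
    rwa [map_mul, hπu, mul_one, map_one] at this
  refine ⟨↑u⁻¹ * g * u, liesAboveIdempotent_span_singleton ?_ ?_ ?_⟩
  · simp only [IsIdempotentElem, mul_assoc, Units.mul_inv_cancel_left]
    rw [← mul_assoc g g, hg.eq]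
  · rw [mul_assoc, hgu]
    exact Submodule.mem_span_singleton.mpr ⟨↑u⁻¹ * g * b, by simp [mul_assoc]⟩
  · have hg' : π g = π (b * a) := Ideal.Quotient.eq.mpr hgba
    rw [← Ideal.Quotient.eq_zero_iff_mem] at hb ⊢
    simpa [hπu, hπu', hg', mul_assoc] using hb

theorem isSemiregularRing_of_forall_liesAboveIdempotent
    (h : ∀ a : R, ∃ e, LiesAboveIdempotent (Submodule.span R {a}) e) : IsSemiregularRing R := by
  rw [IsSemiregularRing, jacRad_eq_jacobson]
  refine ⟨fun a => ?_, fun a ha => ?_⟩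
  · obtain ⟨e, -, hea, hJ⟩ := h a
    obtain ⟨t, rfl⟩ := Submodule.mem_span_singleton.mp hea
    exact ⟨t, by simpa [mul_assoc] using hJ a (Submodule.mem_span_singleton_self a)⟩
  obtain ⟨e, he, hea, hJ⟩ := h a
  obtain ⟨t, ht⟩ := Submodule.mem_span_singleton.mp hea
  -- the idempotent `e = t a` satisfies `e a ≡ e` and `a e ≡ a`, so `g ≡ e + a - e = a`
  let g := e + (1 - e) * a * e
  have hge : g * e = g := by simp only [g, add_mul, mul_assoc, he.eq]
  have heg : e * g = e := by
    simp only [g, mul_add, ← mul_assoc, he.mul_one_sub_self, zero_mul, add_zero, he.eq]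
  refine ⟨g, ?_, ?_⟩
  · calc g * g = g * (e * g) := by rw [← mul_assoc, hge]
      _ = g := by rw [heg, hge]
  have hae : π a * π e = π a := by
    rw [← map_mul, Ideal.Quotient.eq.mpr (hJ a (Submodule.mem_span_singleton_self a))]
  have hea : π e * π a = π e := by
    have : π (a * a) = π a := Ideal.Quotient.eq.mpr (by simpa using neg_mem ha)
    rw [← ht, smul_eq_mul, map_mul, mul_assoc, ← map_mul, this]
  rw [← Ideal.Quotient.eq_zero_iff_mem]
  simp only [g, map_sub, map_add, map_mul, sub_mul, one_mul, hae, hea,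
    ← map_mul π e e, he.eq]
  abel

theorem LiesAboveIdempotent.sup_span_singleton {I : Submodule R R} {e' e a : R}
    (hI : LiesAboveIdempotent I e') (ha : LiesAboveIdempotent (Submodule.span R {a - a * e'}) e) :
    LiesAboveIdempotent (Submodule.span R {a} ⊔ I) (e' + e - e' * e) := by
  obtain ⟨he', he'I, hI⟩ := hI
  obtain ⟨he, hea, ha⟩ := ha
  obtain ⟨t, ht⟩ := Submodule.mem_span_singleton.mp hea
  have hee' : e * e' = 0 := by
    rw [← ht, smul_eq_mul, mul_assoc, sub_mul, mul_assoc, he'.eq, sub_self, mul_zero]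
  set L := Submodule.span R {a} ⊔ I
  have haL : a ∈ L := Submodule.mem_sup_left (Submodule.mem_span_singleton_self a)
  have he'L : e' ∈ L := Submodule.mem_sup_right he'I
  have heL : e ∈ L := ht ▸ L.smul_mem t (L.sub_mem haL (L.smul_mem a he'L))
  have hfL : e' + e - e' * e ∈ L := L.sub_mem (L.add_mem he'L heL) (L.smul_mem e' heL)
  generalize hf : e' + e - e' * e = f at hfL ⊢
  have he'f : e' * f = e' := by
    rw [← hf, mul_sub, mul_add, ← mul_assoc, he'.eq, add_sub_cancel_right]
  have hef : e * f = e := by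
    rw [← hf, mul_sub, mul_add, ← mul_assoc, hee', he.eq, zero_mul, zero_add, sub_zero]
  refine ⟨?_, hfL, fun x hx => ?_⟩
  · rw [IsIdempotentElem]
    nth_rewrite 1 [← hf]
    rw [sub_mul, add_mul, mul_assoc, he'f, hef, hf]
  obtain ⟨p, hp, y, hy, rfl⟩ := Submodule.mem_sup.mp hx
  obtain ⟨r, rfl⟩ := Submodule.mem_span_singleton.mp hp
  have hyf : y - y * f = (y - y * e') * (1 - f) := by
    rw [mul_sub, mul_one, sub_mul, mul_assoc, he'f]
    abel
  have key : r • a + y - (r • a + y) * f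
      = r * ((a - a * e') - (a - a * e') * e) + (y - y * e') * (1 - f) := by
    rw [← hyf, ← hf, smul_eq_mul]
    noncomm_ring
  rw [key]
  exact add_mem (Ideal.mul_mem_left _ r (ha _ (Submodule.mem_span_singleton_self _)))
    (Ideal.mul_mem_right _ _ (hI y hy))

theorem exists_liesAboveIdempotent_of_fg
    (h : ∀ a : R, ∃ e, LiesAboveIdempotent (Submodule.span R {a}) e) {I : Submodule R R}
    (hI : I.FG) : ∃ e, LiesAboveIdempotent I e := by
  classical
  obtain ⟨s, rfl⟩ := hI
  induction s using Finset.induction_on with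
  | empty => exact ⟨0, .zero, by simp, by simp⟩
  | insert a s _ ih =>
    obtain ⟨e', he'⟩ := ih
    obtain ⟨e, he⟩ := h (a - a * e')
    rw [Finset.coe_insert, Submodule.span_insert]
    exact ⟨_, he'.sup_span_singleton he⟩

theorem LiesAboveIdempotent.splitsModJacobson {I : Submodule R R} {e : R}
    (h : LiesAboveIdempotent I e) : SplitsModJacobson I := by
  obtain ⟨he, heI, hI⟩ := h
  let p := LinearMap.toSpanSingleton R R e
  have hp : IsIdempotentElem p := LinearMap.ext fun x => by simp [p, mul_assoc, he.eq]
  refine ⟨LinearMap.range p, LinearMap.ker p, LinearMap.IsIdempotentElem.isCompl hp, ?_, ?_⟩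
  · rintro _ ⟨x, rfl⟩
    exact I.smul_mem x heI
  · rintro x ⟨hxI, hx⟩
    have hxe : x * e = 0 := hx
    simpa [hxe] using hI x hxI

theorem LiesAboveSummand.exists_liesAboveIdempotent {I : Submodule R R} (h : LiesAboveSummand I) :
    ∃ e, LiesAboveIdempotent I e := by
  obtain ⟨D, K, hDK, hDI, hIK⟩ := h
  let p := D.projection K hDK
  have hp (x : R) : p x = x * p 1 := by rw [← smul_eq_mul, ← map_smul, smul_eq_mul, mul_one]
  refine ⟨p 1, ?_, hDI (Submodule.projection_apply_mem _ 1), fun x hx => ?_⟩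
  · rw [IsIdempotentElem, ← hp, Submodule.projection_apply_of_mem_left _
      (Submodule.projection_apply_mem _ 1)]
  · rw [← hp]
    exact hIK.le_jacobson ⟨sub_mem hx (hDI (Submodule.projection_apply_mem _ x)),
      Submodule.sub_projection_mem _ x⟩

end RingLevel

namespace IsSemiregularRing

variable {R : Type*} [Ring R]

theorem fgSplitModJacobson (h : IsSemiregularRing R) : FGSplitModJacobson R R := fun _ hI =>
  let ⟨_, he⟩ := exists_liesAboveIdempotent_of_fg h.exists_liesAboveIdempotent hI
  he.splitsModJacobson

theorem fgSplitModJacobson_pi (h : IsSemiregularRing R) : ∀ n : ℕ, FGSplitModJacobson R (Fin n → R)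
  | 0 => fun _ _ => ⟨⊥, ⊤, isCompl_bot_top, bot_le, fun x _ => Subsingleton.elim x 0 ▸ zero_mem _⟩
  | n + 1 =>
    let e := Fin.consLinearEquiv R fun _ : Fin (n + 1) => R
    (h.fgSplitModJacobson.prod (fgSplitModJacobson_pi h n)).of_retract e e.symm e.comp_symm

theorem fgSplitModJacobson_of_projective (h : IsSemiregularRing R) (P : Type*) [AddCommGroup P]
    [Module R P] [Module.Finite R P] [Module.Projective R P] : FGSplitModJacobson R P := by
  obtain ⟨n, σ, hσ⟩ := Module.Finite.exists_fin' R P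
  obtain ⟨s, hs⟩ := Module.projective_lifting_property σ LinearMap.id hσ
  exact (h.fgSplitModJacobson_pi n).of_retract σ s hs

end IsSemiregularRing

/-- `R` is semiregular iff every finitely generated projective `R`-module is a
d-CS-Rickart module. -/
theorem semiregular_iff_fg_projective_dcsRickart
    {R : Type u} [Ring R] :
    IsSemiregularRing R ↔
    (∀ (P : Type u) [AddCommGroup P] [Module R P],
      Module.Finite R P → Module.Projective R P → IsDCSRickart R P) := by
  refine ⟨fun h P _ _ _ _ => (h.fgSplitModJacobson_of_projective P).isDCSRickart, fun h => ?_⟩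
  refine isSemiregularRing_of_forall_liesAboveIdempotent fun a => ?_
  have hR := h R inferInstance inferInstance (LinearMap.toSpanSingleton R R a)
  rw [← LinearMap.span_singleton_eq_range] at hR
  exact hR.exists_liesAboveIdempotent

end CSRickartPaper
end
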